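/- Let k, q, d ∈ ℂ and let I ⊆ F be the two-sided ideal generated by the three elements x₂x₁ − x₁x₂ − k x₁², x₃x₁ − x₁x₃ − q x₁², and x₃x₂ − x₂x₃ + k x₁x₃ − q x₁x₂ − (d + qk) x₁². Then the images in F/I of the monomials x₁^{a₁} x₂^{a₂} x₃^{a₃}, over all a₁, a₂, a₃ ∈ ℕ, form a ℂ-basis of F/I. (This quotient is the Nichols algebra associated to the braiding of type R_{1,7} with t = 1 and a = p − 2q; it has Gelfand–Kirillov dimension 3.) -/

import Mathlib

/-- The free associative unital `ℂ`-algebra on three generators. -/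
abbrev F : Type := FreeAlgebra ℂ (Fin 3)

/-- The generators `x₁ = X 0`, `x₂ = X 1`, `x₃ = X 2`. -/
noncomputable def X (i : Fin 3) : F := FreeAlgebra.ι ℂ i

/-- Generators: `x₂x₁ − x₁x₂ − k x₁²`, `x₃x₁ − x₁x₃ − q x₁²`, `x₃x₂ − x₂x₃ + k x₁x₃ − q x₁x₂ − (d + qk) x₁²`. -/
noncomputable def S (k q d : ℂ) : Set F :=
  {X 1 * X 0 - X 0 * X 1 - k • (X 0 * X 0),
   X 2 * X 0 - X 0 * X 2 - q • (X 0 * X 0),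
   X 2 * X 1 - X 1 * X 2 + k • (X 0 * X 2) - q • (X 0 * X 1) - (d + q * k) • (X 0 * X 0)}

/-- The relation whose two-sided-ideal closure is the ideal generated by `S`;
`RingQuot rel` is the quotient `F/I`. -/
def rel (k q d : ℂ) : F → F → Prop := fun x y => x ∈ S k q d ∧ y = 0

/-!
Spanning: left multiplication by each generator maps the span of the ordered monomials
`x₁^a x₂^b x₃^n` into itself, by induction on `(a, b)` using the relations to move the generator
to its place; the span contains `1`, so it is everything.

Independence: let the quotient act on the formal combinations of ordered monomials, with `x₁`,
`x₂` acting by explicit formulas and `x₃` by the recursion that the relations dictate. The first two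
relations then hold by computation. For the third, its relator commutes with `x₁` as a formal
consequence of the first two, and it kills every `x₂^b x₃^n` by construction, hence it vanishes.
Applying an ordered monomial to the vector `1` returns that monomial, so the images of the
monomials are independent.
-/

section Algebra

def orderedMonomial {M : Type*} [Monoid M] (x y z : M) (e : ℕ × ℕ × ℕ) : M :=
  x ^ e.1 * y ^ e.2.1 * z ^ e.2.2

lemma map_orderedMonomial {M N G : Type*} [Monoid M] [Monoid N] [FunLike G M N]
    [MonoidHomClass G M N] (f : G) (x y z : M) (e : ℕ × ℕ × ℕ) :
    f (orderedMonomial x y z e) = orderedMonomial (f x) (f y) (f z) e := by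
  simp [orderedMonomial]

variable {R A : Type*} [CommRing R] [Ring A] [Algebra R A]

theorem commute_relator {k q c : R} {x y z : A} (hyx : y * x = x * y + k • (x * x))
    (hzx : z * x = x * z + q • (x * x)) :
    Commute x (z * y - y * z + k • (x * z) - q • (x * y) - c • (x * x)) := by
  have hyx' (w : A) : y * (x * w) = x * (y * w) + k • (x * (x * w)) := by
    rw [← mul_assoc, hyx, add_mul, smul_mul_assoc, mul_assoc, mul_assoc]
  have hzx' (w : A) : z * (x * w) = x * (z * w) + q • (x * (x * w)) := by
    rw [← mul_assoc, hzx, add_mul, smul_mul_assoc, mul_assoc, mul_assoc]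
  simp only [Commute, SemiconjBy, sub_mul, mul_sub, add_mul, mul_add, smul_mul_assoc,
    mul_smul_comm, mul_assoc, hyx, hzx, hyx', hzx', smul_add, smul_smul]
  module

theorem mul_mem_span_range {ι : Type*} {f : ι → A} {a : A}
    (h : ∀ i, a * f i ∈ Submodule.span R (Set.range f)) {v : A}
    (hv : v ∈ Submodule.span R (Set.range f)) : a * v ∈ Submodule.span R (Set.range f) :=
  (Submodule.span_le (p := (Submodule.span R (Set.range f)).comap (LinearMap.mulLeft R a))).2
    (Set.range_subset_iff.2 h) hv

theorem Submodule.eq_top_of_one_mem_of_mul_mem {s : Set A} (hs : Algebra.adjoin R s = ⊤)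
    {M : Submodule R A} (h1 : 1 ∈ M) (hM : ∀ a ∈ s, ∀ v ∈ M, a * v ∈ M) : M = ⊤ := by
  have key (a : A) : ∀ v ∈ M, a * v ∈ M := by
    have ha : a ∈ Algebra.adjoin R s := hs ▸ Algebra.mem_top
    induction ha using Algebra.adjoin_induction with
    | mem a ha => exact hM a ha
    | algebraMap r => exact fun v hv => (Algebra.smul_def r v).symm ▸ M.smul_mem r hv
    | add a b _ _ ha hb =>
      exact fun v hv => (add_mul a b v).symm ▸ M.add_mem (ha v hv) (hb v hv)
    | mul a b _ _ ha hb => exact fun v hv => (mul_assoc a b v).symm ▸ ha _ (hb v hv)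
  exact eq_top_iff'.2 fun a => mul_one a ▸ key a 1 h1

end Algebra

section Spanning

open Submodule Set

variable {R A : Type*} [CommRing R] [Ring A] [Algebra R A] {k q c : R} {x y z : A} {v : A}

lemma orderedMonomial_mem_span (e : ℕ × ℕ × ℕ) :
    orderedMonomial x y z e ∈ span R (range (orderedMonomial x y z)) :=
  subset_span ⟨e, rfl⟩

lemma mul_orderedMonomial_left (a b n : ℕ) :
    x * orderedMonomial x y z (a, b, n) = orderedMonomial x y z (a + 1, b, n) := by
  simp only [orderedMonomial, pow_succ', mul_assoc]

lemma mul_mem_span_orderedMonomial_left (hv : v ∈ span R (range (orderedMonomial x y z))) :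
    x * v ∈ span R (range (orderedMonomial x y z)) := by
  refine mul_mem_span_range (fun ⟨a, b, n⟩ => ?_) hv
  rw [mul_orderedMonomial_left]
  exact orderedMonomial_mem_span _

lemma mul_mem_span_orderedMonomial_middle (hyx : y * x = x * y + k • (x * x))
    (hv : v ∈ span R (range (orderedMonomial x y z))) :
    y * v ∈ span R (range (orderedMonomial x y z)) := by
  refine mul_mem_span_range (fun ⟨a, b, n⟩ => ?_) hv
  induction a with
  | zero =>
    convert orderedMonomial_mem_span (R := R) (0, b + 1, n) using 1
    simp only [orderedMonomial, pow_succ', mul_assoc, pow_zero, one_mul]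
  | succ a ih =>
    rw [← mul_orderedMonomial_left, ← mul_assoc, hyx, add_mul, smul_mul_assoc, mul_assoc,
      mul_assoc]
    exact add_mem (mul_mem_span_orderedMonomial_left ih)
      (smul_mem _ _ (mul_mem_span_orderedMonomial_left (mul_mem_span_orderedMonomial_left
        (orderedMonomial_mem_span _))))

lemma mul_mem_span_orderedMonomial_right (hyx : y * x = x * y + k • (x * x))
    (hzx : z * x = x * z + q • (x * x))
    (hzy : z * y = y * z - k • (x * z) + q • (x * y) + c • (x * x))
    (hv : v ∈ span R (range (orderedMonomial x y z))) :
    z * v ∈ span R (range (orderedMonomial x y z)) := by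
  refine mul_mem_span_range (fun ⟨a, b, n⟩ => ?_) hv
  have hx {w : A} := mul_mem_span_orderedMonomial_left (R := R) (x := x) (y := y) (z := z) (v := w)
  have hy {w : A} := mul_mem_span_orderedMonomial_middle (R := R) (z := z) hyx (v := w)
  induction a with
  | zero =>
    induction b with
    | zero =>
      convert orderedMonomial_mem_span (R := R) (x := x) (y := y) (0, 0, n + 1) using 1
      simp only [orderedMonomial, pow_succ', pow_zero, one_mul]
    | succ b ih =>
      have hmono : orderedMonomial x y z (0, b + 1, n) = y * orderedMonomial x y z (0, b, n) := by
        simp only [orderedMonomial, pow_succ', mul_assoc, pow_zero, one_mul]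
      rw [hmono, ← mul_assoc, hzy]
      simp only [add_mul, sub_mul, smul_mul_assoc, mul_assoc]
      exact add_mem (add_mem (sub_mem (hy ih) (smul_mem _ _ (hx ih)))
        (smul_mem _ _ (hx (hy (orderedMonomial_mem_span _)))))
        (smul_mem _ _ (hx (hx (orderedMonomial_mem_span _))))
  | succ a ih =>
    rw [← mul_orderedMonomial_left, ← mul_assoc, hzx, add_mul, smul_mul_assoc, mul_assoc,
      mul_assoc]
    exact add_mem (hx ih) (smul_mem _ _ (hx (hx (orderedMonomial_mem_span _))))

theorem span_range_orderedMonomial (hgen : Algebra.adjoin R {x, y, z} = ⊤)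
    (hyx : y * x = x * y + k • (x * x)) (hzx : z * x = x * z + q • (x * x))
    (hzy : z * y = y * z - k • (x * z) + q • (x * y) + c • (x * x)) :
    span R (range (orderedMonomial x y z)) = ⊤ := by
  refine eq_top_of_one_mem_of_mul_mem hgen ?_ ?_
  · simpa [orderedMonomial] using orderedMonomial_mem_span (R := R) (x := x) (y := y) (z := z) 0
  · rintro g (rfl | rfl | rfl) v hv
    exacts [mul_mem_span_orderedMonomial_left hv, mul_mem_span_orderedMonomial_middle hyx hv,
      mul_mem_span_orderedMonomial_right hyx hzx hzy hv]

end Spanning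

section NormalForm

open Finsupp

variable {R : Type*} [CommRing R]

-- the coefficient at `(a, b, n)` is that of `x₁^a x₂^b x₃^n`
abbrev NormalForm (R : Type*) [Zero R] := (ℕ × ℕ × ℕ) →₀ R

noncomputable def actX₁ : Module.End R (NormalForm R) :=
  lmapDomain R R fun e => (e.1 + 1, e.2.1, e.2.2)

-- `x₂ x₁^a = x₁^a x₂ + a k x₁^(a+1)` by the first relation
noncomputable def actX₂ (k : R) : Module.End R (NormalForm R) :=
  linearCombination R fun e =>
    single (e.1, e.2.1 + 1, e.2.2) 1 + ((e.1 : R) * k) • single (e.1 + 1, e.2.1, e.2.2) 1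

/-- The normal form of `x₃ x₁^a x₂^b x₃^n`, obtained by moving `x₃` to the right with the
relations. -/
noncomputable def actX₃Single (k q c : R) : ℕ → ℕ → ℕ → NormalForm R
  | 0, 0, n => single (0, 0, n + 1) 1
  | 0, b + 1, n => actX₂ k (actX₃Single k q c 0 b n) - k • actX₁ (actX₃Single k q c 0 b n)
      + q • single (1, b + 1, n) 1 + c • single (2, b, n) 1
  | a + 1, b, n => actX₁ (actX₃Single k q c a b n) + q • single (a + 2, b, n) 1

noncomputable def actX₃ (k q c : R) : Module.End R (NormalForm R) :=
  linearCombination R fun e => actX₃Single k q c e.1 e.2.1 e.2.2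

variable {k q c : R}

@[simp] lemma actX₁_single (a b n : ℕ) :
    actX₁ (single (a, b, n) (1 : R)) = single (a + 1, b, n) 1 := by
  simp [actX₁, mapDomain_single]

@[simp] lemma actX₂_single (a b n : ℕ) :
    actX₂ k (single (a, b, n) 1) =
      single (a, b + 1, n) 1 + ((a : R) * k) • single (a + 1, b, n) 1 := by
  simp [actX₂]

@[simp] lemma actX₃_single (a b n : ℕ) :
    actX₃ k q c (single (a, b, n) 1) = actX₃Single k q c a b n := by
  simp [actX₃]

lemma actX₂_mul_actX₁ :
    actX₂ k * actX₁ = actX₁ * actX₂ k + k • (actX₁ * actX₁ : Module.End R _) := by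
  ext ⟨a, b, n⟩ : 2
  simp only [LinearMap.comp_apply, lsingle_apply, Module.End.mul_apply, LinearMap.add_apply,
    LinearMap.smul_apply, actX₁_single, actX₂_single, map_add, map_smul]
  push_cast
  module

lemma actX₃_mul_actX₁ :
    actX₃ k q c * actX₁ = actX₁ * actX₃ k q c + q • (actX₁ * actX₁ : Module.End R _) := by
  ext ⟨a, b, n⟩ : 2
  simp [actX₃Single]

lemma actX₁_pow_single (a b n : ℕ) :
    (actX₁ ^ a : Module.End R _) (single (0, b, n) 1) = single (a, b, n) 1 := by
  induction a with
  | zero => rfl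
  | succ a ih => rw [pow_succ', Module.End.mul_apply, ih, actX₁_single]

lemma actX₂_pow_single (b n : ℕ) :
    (actX₂ k ^ b : Module.End R _) (single (0, 0, n) 1) = single (0, b, n) 1 := by
  induction b with
  | zero => rfl
  | succ b ih => simp [pow_succ', ih]

lemma actX₃_pow_single (n : ℕ) :
    (actX₃ k q c ^ n : Module.End R _) (single 0 1) = single (0, 0, n) 1 := by
  induction n with
  | zero => rfl
  | succ n ih => simp [pow_succ', ih, actX₃Single]

lemma orderedMonomial_act_single (e : ℕ × ℕ × ℕ) :
    orderedMonomial actX₁ (actX₂ k) (actX₃ k q c) e (single 0 1) = single e 1 := by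
  simp only [orderedMonomial, Module.End.mul_apply, actX₃_pow_single, actX₂_pow_single,
    actX₁_pow_single]

lemma actX₃_mul_actX₂ :
    actX₃ k q c * actX₂ k = actX₂ k * actX₃ k q c - k • (actX₁ * actX₃ k q c)
      + q • (actX₁ * actX₂ k) + c • (actX₁ * actX₁ : Module.End R _) := by
  set T := actX₃ k q c * actX₂ k - actX₂ k * actX₃ k q c + k • (actX₁ * actX₃ k q c)
    - q • (actX₁ * actX₂ k) - c • (actX₁ * actX₁ : Module.End R _) with hT_def
  have hcomm : Commute actX₁ T :=
    commute_relator (A := Module.End R (NormalForm R)) (c := c) actX₂_mul_actX₁ actX₃_mul_actX₁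
  -- for `a = 0` this is the defining recursion of `actX₃Single`
  have hT (b n : ℕ) : T (single (0, b, n) 1) = 0 := by
    simp only [T, LinearMap.sub_apply, LinearMap.add_apply, LinearMap.smul_apply,
      Module.End.mul_apply, actX₁_single, actX₂_single, actX₃_single, actX₃Single, Nat.cast_zero,
      zero_mul, zero_smul, add_zero]
    abel
  suffices T = 0 by rw [← sub_eq_zero, ← this, hT_def]; abel
  ext ⟨a, b, n⟩ : 2
  rw [LinearMap.comp_apply, lsingle_apply, ← actX₁_pow_single, ← Module.End.mul_apply,
    ← (hcomm.pow_left a).eq, Module.End.mul_apply, hT, map_zero, LinearMap.zero_comp,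
    LinearMap.zero_apply]

end NormalForm

section Quotient

variable (k q d : ℂ)

local notation "π" => RingQuot.mkAlgHom ℂ (rel k q d)

lemma mkAlgHom_eq_zero_of_mem_S {s : F} (hs : s ∈ S k q d) : π s = 0 :=
  (RingQuot.mkAlgHom_rel ℂ ⟨hs, rfl⟩).trans (map_zero _)

lemma mkAlgHom_X_one_mul_X_zero :
    π (X 1) * π (X 0) = π (X 0) * π (X 1) + k • (π (X 0) * π (X 0)) := by
  have h := mkAlgHom_eq_zero_of_mem_S k q d (s := X 1 * X 0 - X 0 * X 1 - k • (X 0 * X 0))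
    (by simp [S])
  simp only [map_sub, map_smul, map_mul] at h
  linear_combination (norm := module) h

lemma mkAlgHom_X_two_mul_X_zero :
    π (X 2) * π (X 0) = π (X 0) * π (X 2) + q • (π (X 0) * π (X 0)) := by
  have h := mkAlgHom_eq_zero_of_mem_S k q d (s := X 2 * X 0 - X 0 * X 2 - q • (X 0 * X 0))
    (by simp [S])
  simp only [map_sub, map_smul, map_mul] at h
  linear_combination (norm := module) h

lemma mkAlgHom_X_two_mul_X_one :
    π (X 2) * π (X 1) = π (X 1) * π (X 2) - k • (π (X 0) * π (X 2)) + q • (π (X 0) * π (X 1))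
      + (d + q * k) • (π (X 0) * π (X 0)) := by
  have h := mkAlgHom_eq_zero_of_mem_S k q d (s := X 2 * X 1 - X 1 * X 2 + k • (X 0 * X 2)
    - q • (X 0 * X 1) - (d + q * k) • (X 0 * X 0)) (by simp [S])
  simp only [map_sub, map_add, map_smul, map_mul] at h
  linear_combination (norm := module) h

lemma adjoin_mkAlgHom_X :
    Algebra.adjoin ℂ {π (X 0), π (X 1), π (X 2)} = ⊤ := by
  have hrange : {π (X 0), π (X 1), π (X 2)} = Set.range (π ∘ FreeAlgebra.ι ℂ) := by
    ext
    simp [Fin.exists_fin_succ, X, eq_comm]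
  rw [hrange, Algebra.adjoin_range_eq_range_freeAlgebra_lift, FreeAlgebra.lift_comp_ι,
    AlgHom.range_eq_top]
  exact RingQuot.mkAlgHom_surjective ℂ _

theorem span_range_mkAlgHom_orderedMonomial :
    Submodule.span ℂ (Set.range fun e => π (orderedMonomial (X 0) (X 1) (X 2) e)) = ⊤ := by
  simp_rw [map_orderedMonomial]
  exact span_range_orderedMonomial (adjoin_mkAlgHom_X k q d) (mkAlgHom_X_one_mul_X_zero k q d)
    (mkAlgHom_X_two_mul_X_zero k q d) (mkAlgHom_X_two_mul_X_one k q d)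

noncomputable def normalFormRep : RingQuot (rel k q d) →ₐ[ℂ] Module.End ℂ (NormalForm ℂ) :=
  RingQuot.liftAlgHom ℂ ⟨FreeAlgebra.lift ℂ ![actX₁, actX₂ k, actX₃ k q (d + q * k)], by
    rintro s _ ⟨hs, rfl⟩
    rcases hs with rfl | rfl | rfl <;>
      simp only [X, map_sub, map_add, map_smul, map_mul, map_zero, FreeAlgebra.lift_ι_apply,
        Matrix.cons_val, actX₂_mul_actX₁, actX₃_mul_actX₁, actX₃_mul_actX₂] <;>
      abel⟩

theorem linearIndependent_mkAlgHom_orderedMonomial :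
    LinearIndependent ℂ fun e => π (orderedMonomial (X 0) (X 1) (X 2) e) := by
  refine LinearIndependent.of_comp
    (LinearMap.applyₗ (Finsupp.single 0 1) ∘ₗ (normalFormRep k q d).toLinearMap) ?_
  convert Finsupp.linearIndependent_single_one ℂ (ℕ × ℕ × ℕ) with e
  simp [normalFormRep, map_orderedMonomial, X, orderedMonomial_act_single]

end Quotient

/-- the images in `F/I` of the monomials `x₁^{a₁} x₂^{a₂} x₃^{a₃}` form a `ℂ`-basis. -/
theorem basis_R17_t_one (k q d : ℂ) :
    LinearIndependent ℂ (fun e : ℕ × ℕ × ℕ =>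
      RingQuot.mkAlgHom ℂ (rel k q d) (X 0 ^ e.1 * X 1 ^ e.2.1 * X 2 ^ e.2.2)) ∧
    Submodule.span ℂ (Set.range (fun e : ℕ × ℕ × ℕ =>
      RingQuot.mkAlgHom ℂ (rel k q d) (X 0 ^ e.1 * X 1 ^ e.2.1 * X 2 ^ e.2.2))) = ⊤ :=
  ⟨linearIndependent_mkAlgHom_orderedMonomial k q d, span_range_mkAlgHom_orderedMonomial k q d⟩
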